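/- Let n be a positive integer divisible by 4 and set q = n/4. Then for every t ∈ ZMod n: λ_t(f_q + f_{−q}) = (−1)^{t.val} · (f_q + f_{−q}) and λ_t(f_q − f_{−q}) = (−1)^{t.val + 1} · (f_q − f_{−q}). Consequently V_q is the direct sum of the two invariant lines ℂ·(f_q + f_{−q}) and ℂ·(f_q − f_{−q}) (these realize the one-dimensional representations ℂ(−1,1) and ℂ(1,−1)). -/
import Mathlib


/-- The regular representation of the dihedral quandle `R_n = Quandle.dihedral n`
(`ZMod n` with `x ◃ y = 2y - x`) on functions `ZMod n → ℂ`: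
`(λ_t f)(x) = f (2t - x)`. -/
def lam (n : ℕ) (t : ZMod n) (f : ZMod n → ℂ) : ZMod n → ℂ :=
  fun x => f (2 * t - x)

/-- `ω = exp(2πi/n)`. -/
noncomputable def dihedralOmega (n : ℕ) : ℂ :=
  Complex.exp (2 * Real.pi * Complex.I / n)

/-- The character `f_s : ZMod n → ℂ`, `f_s(x) = ω^{s·x.val}`. -/
noncomputable def chi (n : ℕ) (s : ℤ) : ZMod n → ℂ :=
  fun x => dihedralOmega n ^ (s * (x.val : ℤ))

/-- `V_s`: the `ℂ`-linear span of `{f_s, f_{-s}}` in `ZMod n → ℂ`. -/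
noncomputable def Vsub (n : ℕ) (s : ℤ) : Submodule ℂ (ZMod n → ℂ) :=
  Submodule.span ℂ {chi n s, chi n (-s)}

lemma omega_ne_zero (n : ℕ) : dihedralOmega n ≠ 0 := Complex.exp_ne_zero _

lemma omega_pow_n (n : ℕ) (hpos : 0 < n) : dihedralOmega n ^ (n : ℤ) = 1 := by
  have hn : (n : ℂ) ≠ 0 := Nat.cast_ne_zero.mpr hpos.ne'
  rw [zpow_natCast, dihedralOmega, ← Complex.exp_nat_mul,
    show (n : ℂ) * (2 * Real.pi * Complex.I / n) = 2 * Real.pi * Complex.I by field_simp]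
  exact Complex.exp_two_pi_mul_I

lemma omega_zpow_congr (n : ℕ) (hpos : 0 < n) {a b : ℤ} (h : a ≡ b [ZMOD n]) :
    dihedralOmega n ^ a = dihedralOmega n ^ b := by
  obtain ⟨k, hk⟩ := h.dvd
  have hb : b = a + n * k := by linarith
  subst hb
  rw [zpow_add₀ (omega_ne_zero n), zpow_mul, omega_pow_n n hpos, one_zpow, mul_one]

lemma lam_chi (n : ℕ) (hpos : 0 < n) (s : ℤ) (t : ZMod n) :
    lam n t (chi n s) = (dihedralOmega n ^ (2 * s * (t.val : ℤ))) • chi n (-s) := by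
  haveI : NeZero n := ⟨hpos.ne'⟩
  funext x
  simp only [lam, chi, Pi.smul_apply, smul_eq_mul]
  have hc : (s * (((2 * t - x).val : ℕ) : ℤ)) ≡ 2 * s * (t.val : ℤ) + (-s) * (x.val : ℤ) [ZMOD n] := by
    rw [← ZMod.intCast_eq_intCast_iff]
    push_cast
    simp only [ZMod.natCast_val, ZMod.cast_id]
    ring
  rw [omega_zpow_congr n hpos hc, zpow_add₀ (omega_ne_zero n)]

lemma omega_two_q (n q : ℕ) (hqpos : 0 < q) (hq : n = 4 * q) :
    dihedralOmega n ^ ((2 * q : ℕ) : ℤ) = -1 := by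
  have hqc : (q : ℂ) ≠ 0 := Nat.cast_ne_zero.mpr hqpos.ne'
  rw [zpow_natCast, dihedralOmega, ← Complex.exp_nat_mul, hq,
    show ((2 * q : ℕ) : ℂ) * (2 * Real.pi * Complex.I / ((4 * q : ℕ) : ℂ))
      = Real.pi * Complex.I by push_cast; field_simp; ring]
  exact Complex.exp_pi_mul_I

lemma eig (n q : ℕ) (hpos : 0 < n) (hqpos : 0 < q) (hq : n = 4 * q) (t : ZMod n) :
    dihedralOmega n ^ (2 * (q : ℤ) * (t.val : ℤ)) = (-1 : ℂ) ^ t.val := by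
  have h2q : (2 * (q : ℤ)) = ((2 * q : ℕ) : ℤ) := by push_cast; ring
  rw [h2q, zpow_mul, omega_two_q n q hqpos hq, zpow_natCast]

lemma eig' (n q : ℕ) (hpos : 0 < n) (hqpos : 0 < q) (hq : n = 4 * q) (t : ZMod n) :
    dihedralOmega n ^ (2 * (-(q : ℤ)) * (t.val : ℤ)) = (-1 : ℂ) ^ t.val := by
  have : (2 * (-(q : ℤ)) * (t.val : ℤ)) = -(2 * (q : ℤ) * (t.val : ℤ)) := by ring
  rw [this, zpow_neg, eig n q hpos hqpos hq t, ← inv_pow]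
  norm_num

/-- For `n = 4q > 0`, the regular representation satisfies
`λ_t (f_q + f_{-q}) = (-1)^{t.val} • (f_q + f_{-q})` and
`λ_t (f_q - f_{-q}) = (-1)^{t.val + 1} • (f_q - f_{-q})`.
Consequently `V_q` is the direct sum of the two invariant lines
`ℂ·(f_q + f_{-q})` and `ℂ·(f_q - f_{-q})` (realizing the one-dimensional
representations `ℂ(-1,1)` and `ℂ(1,-1)`). -/
theorem Vq_splits (n q : ℕ) (hpos : 0 < n) (hq : n = 4 * q) :
    (∀ t : ZMod n,
      lam n t (chi n q + chi n (-(q : ℤ)))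
        = ((-1 : ℂ) ^ t.val) • (chi n q + chi n (-(q : ℤ)))) ∧
    (∀ t : ZMod n,
      lam n t (chi n q - chi n (-(q : ℤ)))
        = ((-1 : ℂ) ^ (t.val + 1)) • (chi n q - chi n (-(q : ℤ)))) ∧
    Vsub n q = (ℂ ∙ (chi n q + chi n (-(q : ℤ)))) ⊔ (ℂ ∙ (chi n q - chi n (-(q : ℤ)))) ∧
    Disjoint (ℂ ∙ (chi n q + chi n (-(q : ℤ)))) (ℂ ∙ (chi n q - chi n (-(q : ℤ)))) ∧
    (∀ t : ZMod n, ∀ f ∈ (ℂ ∙ (chi n q + chi n (-(q : ℤ)))),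
      lam n t f ∈ (ℂ ∙ (chi n q + chi n (-(q : ℤ))))) ∧
    (∀ t : ZMod n, ∀ f ∈ (ℂ ∙ (chi n q - chi n (-(q : ℤ)))),
      lam n t f ∈ (ℂ ∙ (chi n q - chi n (-(q : ℤ))))) := by
  haveI : NeZero n := ⟨hpos.ne'⟩
  have hqpos : 0 < q := by omega
  set a := chi n (q : ℤ) with ha
  set b := chi n (-(q : ℤ)) with hb
  -- pointwise action on the characters
  have hlam_a : ∀ t : ZMod n, lam n t a = ((-1 : ℂ) ^ t.val) • b := by
    intro t
    rw [ha, lam_chi n hpos (q : ℤ) t, eig n q hpos hqpos hq t]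
  have hlam_b : ∀ t : ZMod n, lam n t b = ((-1 : ℂ) ^ t.val) • a := by
    intro t
    rw [hb, lam_chi n hpos (-(q : ℤ)) t, eig' n q hpos hqpos hq t, neg_neg, ← ha]
  have hlam_add : ∀ t (f g : ZMod n → ℂ), lam n t (f + g) = lam n t f + lam n t g := by
    intros; rfl
  have hlam_sub : ∀ t (f g : ZMod n → ℂ), lam n t (f - g) = lam n t f - lam n t g := by
    intros; rfl
  have hlam_smul : ∀ t (c : ℂ) (f : ZMod n → ℂ), lam n t (c • f) = c • lam n t f := by
    intros; rfl
  have h1 : ∀ t : ZMod n, lam n t (a + b) = ((-1 : ℂ) ^ t.val) • (a + b) := by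
    intro t
    rw [hlam_add, hlam_a, hlam_b, smul_add]
    abel
  have h2 : ∀ t : ZMod n, lam n t (a - b) = ((-1 : ℂ) ^ (t.val + 1)) • (a - b) := by
    intro t
    rw [hlam_sub, hlam_a, hlam_b, pow_succ]
    rw [smul_sub]
    ext x
    simp only [Pi.sub_apply, Pi.smul_apply, smul_eq_mul]
    ring
  refine ⟨h1, h2, ?_, ?_, ?_, ?_⟩
  · -- span equality
    apply le_antisymm
    · rw [Vsub, Submodule.span_le]
      rintro f (rfl | rfl)
      · have : a = (2⁻¹ : ℂ) • (a + b) + (2⁻¹ : ℂ) • (a - b) := by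
          ext x; simp only [Pi.add_apply, Pi.smul_apply, Pi.sub_apply, smul_eq_mul]; ring
        have hmem := Submodule.add_mem ((ℂ ∙ (a+b)) ⊔ (ℂ ∙ (a-b)))
          (Submodule.mem_sup_left (Submodule.smul_mem _ (2⁻¹ : ℂ) (Submodule.mem_span_singleton_self (a+b))))
          (Submodule.mem_sup_right (Submodule.smul_mem _ (2⁻¹ : ℂ) (Submodule.mem_span_singleton_self (a-b))))
        rwa [← this] at hmem
      · have : b = (2⁻¹ : ℂ) • (a + b) - (2⁻¹ : ℂ) • (a - b) := by
          ext x; simp only [Pi.add_apply, Pi.smul_apply, Pi.sub_apply, smul_eq_mul]; ring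
        have hmem := Submodule.sub_mem ((ℂ ∙ (a+b)) ⊔ (ℂ ∙ (a-b)))
          (Submodule.mem_sup_left (Submodule.smul_mem _ (2⁻¹ : ℂ) (Submodule.mem_span_singleton_self (a+b))))
          (Submodule.mem_sup_right (Submodule.smul_mem _ (2⁻¹ : ℂ) (Submodule.mem_span_singleton_self (a-b))))
        rwa [← this] at hmem
    · rw [sup_le_iff, Submodule.span_singleton_le_iff_mem, Submodule.span_singleton_le_iff_mem]
      constructor
      · exact Submodule.add_mem _
          (Submodule.subset_span (Set.mem_insert _ _))
          (Submodule.subset_span (Set.mem_insert_of_mem _ rfl))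
      · exact Submodule.sub_mem _
          (Submodule.subset_span (Set.mem_insert _ _))
          (Submodule.subset_span (Set.mem_insert_of_mem _ rfl))
  · -- disjointness
    rw [Submodule.disjoint_def]
    intro f hf hg
    obtain ⟨c, rfl⟩ := Submodule.mem_span_singleton.mp hf
    obtain ⟨d, hd⟩ := Submodule.mem_span_singleton.mp hg
    have ha0 : a 0 = 1 := by
      simp [ha, chi, ZMod.val_zero]
    have hb0 : b 0 = 1 := by
      simp [hb, chi, ZMod.val_zero]
    have hc0 : c = 0 := by
      have := congrFun hd 0
      simp only [Pi.smul_apply, Pi.add_apply, Pi.sub_apply, smul_eq_mul, ha0, hb0] at this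
      -- d • (a-b) 0 = d * 0 = 0 ; c • (a+b) 0 = c * 2
      have h2 : c * (1 + 1) = d * (1 - 1) := this.symm
      simpa using h2
    rw [hc0, zero_smul]
  · intro t f hf
    obtain ⟨c, rfl⟩ := Submodule.mem_span_singleton.mp hf
    rw [hlam_smul, h1]
    exact Submodule.smul_mem _ _ (Submodule.smul_mem _ _ (Submodule.mem_span_singleton_self _))
  · intro t f hf
    obtain ⟨c, rfl⟩ := Submodule.mem_span_singleton.mp hf
    rw [hlam_smul, h2]
    exact Submodule.smul_mem _ _ (Submodule.smul_mem _ _ (Submodule.mem_span_singleton_self _))
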